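/- arXiv:0911.4148 — 3 statements merged into one kernel-verified Lean document; each statement's English description precedes it below -/
import Mathlib

section
/- For a uniformly random permutation π of [n], let I = π(1) and fix reals x_1, ..., x_n with |x_1| ≥ |x_2| ≥ ... ≥ |x_n|, reals y_1, ..., y_n, and 0/1 indicators L_{z,i'} = 1 iff |x_z·y_{i'}| < c for a fixed c > 0. Define Z = x_1·y_I·L_{1,I} − (1/(n−1))·Σ_{z≠1} x_z·y_I·L_{z,I}. Then E[Z²] ≤ (4/n)·Σ_{i'} x_1²·y_{i'}²·L_{1,i'} + (1/(n(n−1)))·Σ_{z>1} Σ_{i'} x_z²·y_{i'}²·L_{z,i'}. -/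
open Finset

/-!
For fixed `I`, the value `Z I` is `a * l - m`, where `a = x₁ y_I`, `l = L_{1,I} ∈ {0,1}`
and `m` is the mean of the numbers `x_z y_I L_{z,I}`, `z ≠ 1`. Each of these numbers is bounded in
absolute value by `|a|` since `|x_z| ≤ |x₁|`. If `l = 1` then `|a - m| ≤ 2|a|`, so `Z I ^ 2 ≤ 4 a²`;
if `l = 0` then `Z I ^ 2 = m²`, which is at most the mean of the squares by Cauchy–Schwarz.
Averaging over `I` and exchanging the order of summation gives the bound.
-/

section Mean

variable {ι : Type*} {s : Finset ι} {f : ι → ℝ}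

theorem abs_sum_div_card_le_abs {a : ℝ} (hf : ∀ i ∈ s, |f i| ≤ |a|) :
    |(∑ i ∈ s, f i) / #s| ≤ |a| := by
  obtain rfl | hs := s.eq_empty_or_nonempty
  · simp
  rw [abs_div, Nat.abs_cast, div_le_iff₀ (by positivity), mul_comm]
  calc |∑ i ∈ s, f i| ≤ ∑ i ∈ s, |f i| := abs_sum_le_sum_abs f s
    _ ≤ #s * |a| := by simpa using sum_le_card_nsmul s _ _ hf

theorem sq_mul_sub_sum_div_card_le {a l : ℝ} (hl : l = 0 ∨ l = 1)
    (hf : ∀ i ∈ s, |f i| ≤ |a|) :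
    (a * l - (∑ i ∈ s, f i) / #s) ^ 2 ≤ 4 * (a ^ 2 * l) + (∑ i ∈ s, f i ^ 2) / #s := by
  rcases hl with rfl | rfl
  · simpa using sum_div_card_sq_le_sum_sq_div_card
  · have hmean := abs_sum_div_card_le_abs hf
    have hsq : (a - (∑ i ∈ s, f i) / #s) ^ 2 ≤ (2 * a) ^ 2 := by
      rw [sq_le_sq, abs_mul, abs_two]
      linarith [abs_sub a ((∑ i ∈ s, f i) / #s)]
    have hsq_nonneg : 0 ≤ (∑ i ∈ s, f i ^ 2) / #s := by positivity
    linarith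

end Mean

theorem stmt_6_general (n : ℕ) (x y : Fin n → ℝ) (c : ℝ)
    (o : Fin n) (ho : (o : ℕ) = 0)
    (hmono : ∀ z z' : Fin n, z ≤ z' → |x z'| ≤ |x z|)
    (L : Fin n → Fin n → ℝ)
    (hL : ∀ z i', L z i' = if |x z * y i'| < c then 1 else 0)
    (Z : Fin n → ℝ)
    (hZ : ∀ I, Z I = x o * y I * L o I -
      (1 / ((n : ℝ) - 1)) * ∑ z ∈ univ.erase o, x z * y I * L z I) :
    (1 / (n : ℝ)) * ∑ I, (Z I) ^ 2 ≤
      (4 / (n : ℝ)) * ∑ i', (x o) ^ 2 * (y i') ^ 2 * L o i' +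
        (1 / ((n : ℝ) * ((n : ℝ) - 1))) *
          ∑ z ∈ univ.erase o, ∑ i', (x z) ^ 2 * (y i') ^ 2 * L z i' := by
  have hL01 : ∀ z i, L z i = 0 ∨ L z i = 1 := fun z i => by rw [hL]; split_ifs <;> simp
  have hcard : (#(univ.erase o) : ℝ) = n - 1 := by
    rw [card_erase_of_mem (mem_univ o), card_univ, Fintype.card_fin,
      Nat.cast_sub (Nat.one_le_iff_ne_zero.mpr o.pos.ne')]
    simp
  have hdom : ∀ z I, |x z * y I * L z I| ≤ |x o * y I| := fun z I => by
    have hx : |x z| ≤ |x o| := hmono o z (Fin.le_def.mpr (by omega))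
    rcases hL01 z I with h | h <;> simp only [h, mul_zero, mul_one, abs_zero, abs_mul]
    · positivity
    · gcongr
  have hpoint : ∀ I, Z I ^ 2 ≤ 4 * (x o ^ 2 * y I ^ 2 * L o I) +
      1 / ((n : ℝ) - 1) * ∑ z ∈ univ.erase o, x z ^ 2 * y I ^ 2 * L z I := fun I => by
    have := sq_mul_sub_sum_div_card_le (hL01 o I) (fun z (_ : z ∈ univ.erase o) => hdom z I)
    rw [hcard] at this
    convert this using 2
    · rw [hZ, one_div_mul_eq_div]
    · ring
    · rw [one_div_mul_eq_div]
      congr 1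
      refine sum_congr rfl fun z _ => ?_
      rcases hL01 z I with h | h <;> simp [h, mul_pow]
  calc (1 / (n : ℝ)) * ∑ I, Z I ^ 2
      ≤ (1 / (n : ℝ)) * ∑ I, (4 * (x o ^ 2 * y I ^ 2 * L o I) +
          1 / ((n : ℝ) - 1) * ∑ z ∈ univ.erase o, x z ^ 2 * y I ^ 2 * L z I) := by
        gcongr with I; exact hpoint I
    _ = _ := by
        rw [sum_add_distrib, ← mul_sum, ← mul_sum, sum_comm, ← one_div_mul_one_div]
        ring

/-- Variance bound for the increment of the light-pairs martingale: with `I` uniform on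
`[n]`, `|x_1| ≥ |x_2| ≥ …`, indicators `L_{z,i'} = 1{|x_z y_{i'}| < c}` and
`Z = x_1 y_I L_{1,I} − (n−1)⁻¹ ∑_{z≠1} x_z y_I L_{z,I}`, one has
`E[Z²] ≤ (4/n) ∑_{i'} x_1² y_{i'}² L_{1,i'} + (n(n−1))⁻¹ ∑_{z>1} ∑_{i'} x_z² y_{i'}² L_{z,i'}`.
Here `o : Fin n` plays the role of the first index `1`. -/
theorem stmt_6 (n : ℕ) (hn : 2 ≤ n) (x y : Fin n → ℝ) (c : ℝ) (hc : 0 < c)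
    (o : Fin n) (ho : (o : ℕ) = 0)
    (hmono : ∀ z z' : Fin n, z ≤ z' → |x z'| ≤ |x z|)
    (L : Fin n → Fin n → ℝ)
    (hL : ∀ z i', L z i' = if |x z * y i'| < c then 1 else 0)
    (Z : Fin n → ℝ)
    (hZ : ∀ I, Z I = x o * y I * L o I -
      (1 / ((n : ℝ) - 1)) * ∑ z ∈ univ.erase o, x z * y I * L z I) :
    (1 / (n : ℝ)) * ∑ I, (Z I) ^ 2 ≤
      (4 / (n : ℝ)) * ∑ i', (x o) ^ 2 * (y i') ^ 2 * L o i' +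
        (1 / ((n : ℝ) * ((n : ℝ) - 1))) *
          ∑ z ∈ univ.erase o, ∑ i', (x z) ^ 2 * (y i') ^ 2 * L z i' :=
  stmt_6_general n x y c o ho hmono L hL Z hZ
end

section
/- Let ε = 1/(d√N) with d ≥ 1, N ≥ 1. The number of points x in the lattice (εℤ)^N with ‖x‖ ≤ 1 is at most (√(2πe)·(d+1))^N. -/
/-!
Around each point `x` of the lattice `(εℤ)^N` in the unit ball put the open cube
`∏ₖ (xₖ, xₖ + ε)` of volume `ε^N`. These cubes are pairwise disjoint and lie in the ball of
radius `1 + ε√N = 1 + 1/d`, so there are at most `vol(B(1 + 1/d)) / ε^N` lattice points. The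
volume `π^{N/2} R^N / Γ(N/2 + 1)` of the ball is bounded with `Γ(x + 1) ≥ x^x e^{-x}`, obtained
by restricting the Gamma integral to `(x, ∞)`. The same bound for every finite subset of the
lattice points also gives their finiteness.
-/

open MeasureTheory Set Real Fintype

theorem Real.rpow_mul_exp_neg_le_Gamma_add_one {x : ℝ} (hx : 0 ≤ x) :
    x ^ x * exp (-x) ≤ Gamma (x + 1) := by
  have hint : IntegrableOn (fun t : ℝ => exp (-t) * t ^ x) (Ioi 0) := by
    simpa using GammaIntegral_convergent (by linarith : (0 : ℝ) < x + 1)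
  calc x ^ x * exp (-x) = ∫ t in Ioi x, exp (-t) * x ^ x := by
        rw [integral_mul_const, integral_exp_neg_Ioi, mul_comm]
    _ ≤ ∫ t in Ioi x, exp (-t) * t ^ x := by
        refine setIntegral_mono_on ?_ (hint.mono_set (Ioi_subset_Ioi hx)) measurableSet_Ioi
          fun t ht => ?_
        · exact (integrableOn_exp_neg_Ioi x).mul_const (x ^ x)
        · gcongr
          exact le_of_lt ht
    _ ≤ ∫ t in Ioi 0, exp (-t) * t ^ x := by
        refine setIntegral_mono_set hint ?_ (Ioi_subset_Ioi hx).eventuallyLE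
        filter_upwards [ae_restrict_mem measurableSet_Ioi] with t (ht : 0 < t)
        positivity
    _ = Gamma (x + 1) := by simpa using (Gamma_eq_integral (by linarith : (0 : ℝ) < x + 1)).symm

theorem Real.sqrt_div_two_exp_pow_le_Gamma (n : ℕ) :
    √(n / (2 * exp 1)) ^ n ≤ Gamma (n / 2 + 1) := by
  convert rpow_mul_exp_neg_le_Gamma_add_one (x := (n : ℝ) / 2) (by positivity) using 1
  rw [sqrt_eq_rpow, ← rpow_natCast, ← rpow_mul (by positivity),
    show (n : ℝ) / (2 * exp 1) = n / 2 * (exp 1)⁻¹ by ring, one_div_mul_eq_div,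
    mul_rpow (by positivity) (by positivity), inv_rpow (exp_pos 1).le, exp_one_rpow, ← exp_neg]

theorem EuclideanSpace.volume_closedBall_le {ι : Type*} [Fintype ι] [Nonempty ι]
    (x : EuclideanSpace ℝ ι) {r : ℝ} (hr : 0 ≤ r) :
    volume (Metric.closedBall x r) ≤
      ENNReal.ofReal ((r * √(2 * π * exp 1 / card ι)) ^ card ι) := by
  set n := card ι
  have hn : (0 : ℝ) < n := by exact_mod_cast Fintype.card_pos
  rw [volume_closedBall, ← ENNReal.ofReal_pow hr, ← ENNReal.ofReal_mul (by positivity),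
    mul_pow]
  gcongr
  calc √π ^ n / Gamma (n / 2 + 1) ≤ √π ^ n / √(n / (2 * exp 1)) ^ n := by
        gcongr
        exact sqrt_div_two_exp_pow_le_Gamma n
    _ = √(2 * π * exp 1 / n) ^ n := by
        rw [← div_pow, ← sqrt_div' _ (by positivity)]
        congr 2
        field_simp

def scaledIntLattice (ι : Type*) (ε : ℝ) : Set (ι → ℝ) := {x | ∀ k, ∃ z : ℤ, x k = z * ε}

def openCube {ι : Type*} (x : ι → ℝ) (ε : ℝ) : Set (ι → ℝ) :=
  pi univ fun k => Ioo (x k) (x k + ε)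

section Cubes

variable {ι : Type*} {ε : ℝ}

theorem pairwiseDisjoint_openCube_scaledIntLattice (hε : 0 < ε) :
    (scaledIntLattice ι ε).PairwiseDisjoint (openCube · ε) := by
  intro x hx y hy hxy
  obtain ⟨k, hk⟩ := Function.ne_iff.1 hxy
  obtain ⟨a, ha⟩ := hx k
  obtain ⟨b, hb⟩ := hy k
  have hab : a ≠ b := by rintro rfl; exact hk (ha.trans hb.symm)
  refine disjoint_univ_pi.2 ⟨k, Ioo_disjoint_Ioo.2 ?_⟩
  rw [ha, hb]
  rcases hab.lt_or_gt with h | h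
  · have : (a : ℝ) + 1 ≤ b := by exact_mod_cast h
    exact (min_le_left _ _).trans ((by nlinarith : a * ε + ε ≤ b * ε).trans (le_max_right _ _))
  · have : (b : ℝ) + 1 ≤ a := by exact_mod_cast h
    exact (min_le_right _ _).trans ((by nlinarith : b * ε + ε ≤ a * ε).trans (le_max_left _ _))

variable [Fintype ι]

theorem volume_openCube (x : ι → ℝ) (ε : ℝ) :
    volume (openCube x ε) = ENNReal.ofReal ε ^ card ι := by
  simp [openCube, volume_pi_Ioo]

theorem openCube_subset_closedBall (x : ι → ℝ) (hε : 0 ≤ ε) :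
    openCube x ε ⊆
      WithLp.toLp 2 ⁻¹' Metric.closedBall (WithLp.toLp 2 x) (ε * √(card ι)) := by
  intro y hy
  have hcoord : ∀ k, dist (y k) (x k) ≤ ε := fun k => by
    obtain ⟨h₁, h₂⟩ := hy k (mem_univ k)
    rw [Real.dist_eq, abs_le]
    constructor <;> linarith
  rw [mem_preimage, Metric.mem_closedBall, EuclideanSpace.dist_eq]
  calc √(∑ k, dist (y k) (x k) ^ 2) ≤ √(∑ _k : ι, ε ^ 2) := by
        gcongr with k; exact hcoord k
    _ = ε * √(card ι) := by
        rw [Finset.sum_const, Finset.card_univ, nsmul_eq_mul, sqrt_mul' _ (sq_nonneg ε),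
          sqrt_sq hε, mul_comm]

end Cubes

section Packing

variable {ι : Type*} [Fintype ι] {ε r : ℝ}

theorem card_mul_volume_openCube_le_volume_closedBall (hε : 0 < ε) (F : Finset (ι → ℝ))
    (hF : ∀ x ∈ F, x ∈ scaledIntLattice ι ε ∧ ‖WithLp.toLp 2 x‖ ≤ r) :
    F.card * ENNReal.ofReal ε ^ card ι ≤
      volume (Metric.closedBall (0 : EuclideanSpace ℝ ι) (r + ε * √(card ι))) := by
  have hdisj : (F : Set (ι → ℝ)).PairwiseDisjoint (openCube · ε) :=
    (pairwiseDisjoint_openCube_scaledIntLattice hε).subset fun x hx => (hF x hx).1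
  have hsub : ⋃ x ∈ F, openCube x ε ⊆
      WithLp.toLp 2 ⁻¹' Metric.closedBall 0 (r + ε * √(card ι)) :=
    iUnion₂_subset fun x hx => (openCube_subset_closedBall x hε.le).trans <|
      preimage_mono <| Metric.closedBall_subset_closedBall' <| by
        rw [dist_zero_right, add_comm]; gcongr; exact (hF x hx).2
  calc F.card * ENNReal.ofReal ε ^ card ι = ∑ x ∈ F, volume (openCube x ε) := by
        simp [volume_openCube]
    _ = volume (⋃ x ∈ F, openCube x ε) :=
        (measure_biUnion_finset hdisj fun _ _ =>
          MeasurableSet.univ_pi fun _ => measurableSet_Ioo).symm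
    _ ≤ volume (WithLp.toLp 2 ⁻¹' Metric.closedBall (0 : EuclideanSpace ℝ ι) _) :=
        measure_mono hsub
    _ = _ := (PiLp.volume_preserving_toLp ι).measure_preimage
        Metric.isClosed_closedBall.measurableSet.nullMeasurableSet

theorem card_le_of_subset_scaledIntLattice [Nonempty ι] (hε : 0 < ε) (hr : 0 ≤ r)
    (F : Finset (ι → ℝ)) (hF : ∀ x ∈ F, x ∈ scaledIntLattice ι ε ∧ ‖WithLp.toLp 2 x‖ ≤ r) :
    (F.card : ℝ) ≤
      ((r + ε * √(card ι)) * √(2 * π * exp 1 / card ι) / ε) ^ card ι := by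
  have h := (card_mul_volume_openCube_le_volume_closedBall hε F hF).trans
    (EuclideanSpace.volume_closedBall_le 0 (by positivity))
  rw [← ENNReal.ofReal_natCast, ← ENNReal.ofReal_pow hε.le,
    ← ENNReal.ofReal_mul (by positivity), ENNReal.ofReal_le_ofReal_iff (by positivity)] at h
  rw [div_pow, le_div_iff₀ (by positivity)]
  exact h

end Packing

theorem Set.finite_and_ncard_le_of_forall_finset_card_le {α : Type*} {s : Set α} {B : ℝ}
    (h : ∀ t : Finset α, ↑t ⊆ s → (t.card : ℝ) ≤ B) : s.Finite ∧ (s.ncard : ℝ) ≤ B := by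
  have hs : s.Finite := by
    by_contra hs
    obtain ⟨t, hts, hcard⟩ := Infinite.exists_subset_card_eq hs (⌊B⌋₊ + 1)
    have := h t hts
    rw [hcard, Nat.cast_add_one] at this
    linarith [Nat.lt_floor_add_one B]
  exact ⟨hs, by simpa [ncard_eq_toFinset_card s hs] using h hs.toFinset (by simp)⟩

/-- The number of points of the lattice `(εℤ)^N`, with `ε = 1/(d√N)`, lying in the unit
Euclidean ball is at most `(√(2πe)·(d+1))^N`. -/
theorem stmt_7 (N : ℕ) (hN : 1 ≤ N) (d : ℝ) (hd : 1 ≤ d) :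
    ({x : Fin N → ℝ |
        (∀ k, ∃ z : ℤ, x k = (z : ℝ) * (1 / (d * Real.sqrt N))) ∧
        Real.sqrt (∑ k, (x k) ^ 2) ≤ 1}).Finite ∧
    ({x : Fin N → ℝ |
        (∀ k, ∃ z : ℤ, x k = (z : ℝ) * (1 / (d * Real.sqrt N))) ∧
        Real.sqrt (∑ k, (x k) ^ 2) ≤ 1}).ncard ≤
      (Real.sqrt (2 * Real.pi * Real.exp 1) * (d + 1)) ^ N := by
  have : Nonempty (Fin N) := ⟨⟨0, hN⟩⟩
  have hN₀ : (0 : ℝ) < N := by exact_mod_cast hN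
  have hε : 0 < 1 / (d * √N) := by positivity
  have hB : ((1 + 1 / (d * √N) * √N) * √(2 * π * exp 1 / N) / (1 / (d * √N))) ^ N =
      (√(2 * π * exp 1) * (d + 1)) ^ N := by
    rw [sqrt_div' _ hN₀.le]
    field_simp
  refine finite_and_ncard_le_of_forall_finset_card_le fun F hF => ?_
  rw [← hB]
  simpa using card_le_of_subset_scaledIntLattice hε zero_le_one F fun x hx => by
    obtain ⟨hlat, hnorm⟩ := hF hx
    refine ⟨hlat, ?_⟩
    simpa [EuclideanSpace.norm_eq] using hnorm
end

section
/- Let G be a d-regular graph on m vertices with Cheeger constant h(G) = min over nonempty proper subsets S of |∂S|/min(|S|,|V∖S|), and second eigenvalue λ₂ of its adjacency matrix. Then (d − λ₂)/2 ≤ h(G). -/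
/-!
Take the test vector `x` equal to `|Sᶜ|` on `S` and to `-|S|` on `Sᶜ`. Its entries sum to zero,
and in a connected `d`-regular graph the `d`-eigenvector is constant (it lies in the kernel of the
Laplacian `L = d - A`), so `x` is orthogonal to it and `xᵀAx ≤ λ₂ ‖x‖²`. With `n = |S| + |Sᶜ|`
we have `xᵀLx = n² |∂S|` and `‖x‖² = |S| |Sᶜ| n`, so this reads `(d - λ₂) |S| |Sᶜ| ≤ n |∂S|`;
finally `n / (|S| |Sᶜ|) ≤ 2 / min |S| |Sᶜ|`.
-/

open Finset Matrix
open scoped Classical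

theorem Finset.sum_ite_mem_univ {V M : Type*} [Fintype V] [DecidableEq V] [AddCommMonoid M]
    (S : Finset V) (a c : M) : ∑ u, (if u ∈ S then a else c) = #S • a + #Sᶜ • c := by
  rw [← sum_add_sum_compl S, sum_congr rfl fun u hu => if_pos hu,
    sum_congr rfl fun u hu => if_neg (mem_compl.1 hu), sum_const, sum_const]

theorem div_two_le_div_min {t E a b : ℝ} (ha : 0 < a) (hb : 0 < b) (hE : 0 ≤ E)
    (h : t * (a * b) ≤ E * (a + b)) : t / 2 ≤ E / min a b := by
  have hmin : min a b * (a + b) ≤ 2 * (a * b) := by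
    rcases min_cases a b with ⟨hm, hab⟩ | ⟨hm, hab⟩ <;> rw [hm] <;> nlinarith
  calc t / 2 ≤ E * (a + b) / (2 * (a * b)) := by
        rw [div_le_div_iff₀ two_pos (by positivity)]; linarith
    _ ≤ E / min a b := by
        rw [div_le_div_iff₀ (by positivity) (lt_min ha hb)]
        nlinarith [mul_le_mul_of_nonneg_left hmin hE]

theorem Matrix.IsHermitian.dotProduct_mulVec_le_of_orthogonal {n : Type*} [Fintype n]
    [DecidableEq n] {A : Matrix n n ℝ} (hA : A.IsHermitian) {i₀ : n} {μ : ℝ}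
    (hμ : ∀ i ≠ i₀, hA.eigenvalues i ≤ μ) {x : n → ℝ}
    (hx : ⇑(hA.eigenvectorBasis i₀) ⬝ᵥ x = 0) :
    x ⬝ᵥ (A *ᵥ x) ≤ μ * (x ⬝ᵥ x) := by
  set b := hA.eigenvectorBasis
  have parseval (y z : n → ℝ) : y ⬝ᵥ z = ∑ i, (⇑(b i) ⬝ᵥ y) * (⇑(b i) ⬝ᵥ z) := by
    simpa [EuclideanSpace.inner_eq_star_dotProduct, dotProduct_comm] using
      (b.sum_inner_mul_inner (WithLp.toLp 2 y) (WithLp.toLp 2 z)).symm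
  have coord (i : n) : ⇑(b i) ⬝ᵥ (A *ᵥ x) = hA.eigenvalues i * (⇑(b i) ⬝ᵥ x) := by
    rw [dotProduct_mulVec, ← mulVec_transpose, (isHermitian_iff_isSymm.1 hA).eq,
      hA.mulVec_eigenvectorBasis, smul_dotProduct, smul_eq_mul]
  calc x ⬝ᵥ (A *ᵥ x) = ∑ i, (⇑(b i) ⬝ᵥ x) * (hA.eigenvalues i * (⇑(b i) ⬝ᵥ x)) := by
        simp only [parseval x, coord]
    _ ≤ ∑ i, μ * ((⇑(b i) ⬝ᵥ x) * (⇑(b i) ⬝ᵥ x)) := by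
        refine sum_le_sum fun i _ => ?_
        rcases eq_or_ne i i₀ with rfl | hi
        · simp [b, hx]
        · nlinarith [hμ i hi, mul_self_nonneg (⇑(b i) ⬝ᵥ x)]
    _ = μ * (x ⬝ᵥ x) := by rw [← mul_sum, ← parseval]

namespace SimpleGraph

variable {V : Type*} [Fintype V] [DecidableEq V] {G : SimpleGraph V} [DecidableRel G.Adj]

theorem IsRegularOfDegree.degMatrix_eq {R : Type*} [NonAssocSemiring R] {d : ℕ}
    (hreg : G.IsRegularOfDegree d) : G.degMatrix R = (d : R) • 1 := by
  ext i j
  simp [degMatrix, hreg.degree_eq, diagonal_apply, one_apply]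

theorem IsRegularOfDegree.adjMatrix_mulVec {R : Type*} [Ring R] {d : ℕ}
    (hreg : G.IsRegularOfDegree d) (x : V → R) :
    G.adjMatrix R *ᵥ x = (d : R) • x - G.lapMatrix R *ᵥ x := by
  rw [lapMatrix, hreg.degMatrix_eq, sub_mulVec, smul_mulVec, one_mulVec, sub_sub_cancel]

theorem IsRegularOfDegree.eq_of_adjMatrix_mulVec_eq_smul {d : ℕ}
    (hreg : G.IsRegularOfDegree d) (hconn : G.Connected) {x : V → ℝ}
    (hx : G.adjMatrix ℝ *ᵥ x = (d : ℝ) • x) (u w : V) : x u = x w := by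
  rw [hreg.adjMatrix_mulVec, sub_eq_self] at hx
  exact (lapMatrix_mulVec_eq_zero_iff_forall_reachable G).1 hx u w (hconn u w)

variable (G)

theorem card_filter_edgeFinset_cut_eq_sum (S : Finset V)
    [DecidablePred fun e : Sym2 V => ∃ a ∈ S, ∃ b ∉ S, e = s(a, b)] :
    #(G.edgeFinset.filter fun e => ∃ a ∈ S, ∃ b ∉ S, e = s(a, b)) =
      ∑ u ∈ S, ∑ w ∈ Sᶜ, if G.Adj u w then 1 else 0 := by
  rw [← sum_product', sum_boole, Nat.cast_id]
  symm
  refine card_bij (fun p _ => s(p.1, p.2)) ?_ ?_ ?_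
  · simp only [mem_filter, mem_product, mem_compl, mem_edgeFinset, mem_edgeSet]
    exact fun p ⟨⟨hu, hw⟩, hadj⟩ => ⟨hadj, p.1, hu, p.2, hw, rfl⟩
  · simp only [mem_filter, mem_product, mem_compl]
    rintro ⟨u, w⟩ ⟨⟨hu, -⟩, -⟩ ⟨u', w'⟩ ⟨⟨-, hw'⟩, -⟩ h
    rcases Sym2.eq_iff.1 h with ⟨rfl, rfl⟩ | ⟨rfl, -⟩
    · rfl
    · exact absurd hu hw'
  · simp only [mem_filter, mem_edgeFinset]
    rintro e ⟨he, u, hu, w, hw, rfl⟩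
    exact ⟨(u, w), by simpa [hu, hw] using he, rfl⟩

theorem dotProduct_lapMatrix_mulVec_ite (S : Finset V) (a c : ℝ) :
    (fun u => if u ∈ S then a else c) ⬝ᵥ (G.lapMatrix ℝ *ᵥ fun u => if u ∈ S then a else c) =
      (a - c) ^ 2 * ∑ u ∈ S, ∑ w ∈ Sᶜ, if G.Adj u w then 1 else 0 := by
  set x : V → ℝ := fun u => if u ∈ S then a else c
  set cut : V → V → ℝ := fun u w =>
    if u ∈ S then if w ∈ Sᶜ then if G.Adj u w then 1 else 0 else 0 else 0
  have hterm (u w : V) :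
      (if G.Adj u w then (x u - x w) ^ 2 else 0) = (a - c) ^ 2 * (cut u w + cut w u) := by
    by_cases hu : u ∈ S <;> by_cases hw : w ∈ S <;> by_cases h : G.Adj u w <;>
      simp [x, cut, hu, hw, h, G.adj_comm w u, sub_sq_comm c a]
  have hcut : ∑ u, ∑ w, cut u w = ∑ u ∈ S, ∑ w ∈ Sᶜ, if G.Adj u w then 1 else 0 := by
    simp only [cut, sum_ite_irrel, sum_const_zero, Fintype.sum_ite_mem]
  rw [← toLinearMap₂'_apply', lapMatrix_toLinearMap₂']
  simp only [hterm, ← mul_sum, sum_add_distrib]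
  rw [sum_comm (f := fun u w => cut w u), hcut]
  ring

end SimpleGraph

theorem stmt_18_general (m d : ℕ) (G : SimpleGraph (Fin m))
    (hconn : G.Connected) (hreg : G.IsRegularOfDegree d)
    (hA : (G.adjMatrix ℝ).IsHermitian) (i₀ : Fin m)
    (hi₀ : hA.eigenvalues i₀ = d) (lam2 : ℝ)
    (hlam2 : IsGreatest {μ : ℝ | ∃ i ≠ i₀, hA.eigenvalues i = μ} lam2) :
    ∀ S : Finset (Fin m), S.Nonempty → S ≠ univ →
      ((d : ℝ) - lam2) / 2 ≤
        ((G.edgeFinset.filter (fun e => ∃ a ∈ S, ∃ b ∉ S, e = s(a, b))).card : ℝ) /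
          min (S.card : ℝ) ((univ \ S).card : ℝ) := by
  intro S hS hSu
  rw [← compl_eq_univ_sdiff, G.card_filter_edgeFinset_cut_eq_sum]
  have hb : (0 : ℝ) < #S := by exact_mod_cast hS.card_pos
  have ha : (0 : ℝ) < #Sᶜ := by
    exact_mod_cast (nonempty_iff_ne_empty.2 (mt (compl_eq_empty_iff S).1 hSu)).card_pos
  set x : Fin m → ℝ := fun u => if u ∈ S then (#Sᶜ : ℝ) else -#S
  have horth : ⇑(hA.eigenvectorBasis i₀) ⬝ᵥ x = 0 := by
    obtain ⟨u₀, -⟩ := hS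
    have hconst := hreg.eq_of_adjMatrix_mulVec_eq_smul hconn
      (hi₀ ▸ hA.mulVec_eigenvectorBasis i₀)
    simp only [dotProduct, hconst _ u₀, ← mul_sum, x, sum_ite_mem_univ, nsmul_eq_mul]
    ring
  have hxx : x ⬝ᵥ x = #S * #Sᶜ * (#S + #Sᶜ) := by
    simp only [dotProduct, x, ite_mul_ite, sum_ite_mem_univ, nsmul_eq_mul]
    ring
  have hray := hA.dotProduct_mulVec_le_of_orthogonal (fun i hi => hlam2.2 ⟨i, hi, rfl⟩) horth
  rw [hreg.adjMatrix_mulVec, dotProduct_sub, dotProduct_smul, smul_eq_mul,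
    G.dotProduct_lapMatrix_mulVec_ite, hxx] at hray
  push_cast
  refine div_two_le_div_min hb ha (by positivity) ?_
  nlinarith

/-- Easy direction of the discrete Cheeger inequality: if `G` is a connected `d`-regular
graph on `m` vertices with second largest adjacency eigenvalue `λ₂`, then for every
nonempty proper vertex subset `S`, `(d − λ₂)/2 ≤ |∂S| / min(|S|, |Sᶜ|)`; that is,
`(d − λ₂)/2 ≤ h(G)`. -/
theorem stmt_18 (m d : ℕ) (hm : 2 ≤ m) (G : SimpleGraph (Fin m))
    (hconn : G.Connected) (hreg : G.IsRegularOfDegree d)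
    (hA : (G.adjMatrix ℝ).IsHermitian) (i₀ : Fin m)
    (hi₀ : hA.eigenvalues i₀ = d) (lam2 : ℝ)
    (hlam2 : IsGreatest {μ : ℝ | ∃ i ≠ i₀, hA.eigenvalues i = μ} lam2) :
    ∀ S : Finset (Fin m), S.Nonempty → S ≠ univ →
      ((d : ℝ) - lam2) / 2 ≤
        ((G.edgeFinset.filter (fun e => ∃ a ∈ S, ∃ b ∉ S, e = s(a, b))).card : ℝ) /
          min (S.card : ℝ) ((univ \ S).card : ℝ) :=
  stmt_18_general m d G hconn hreg hA i₀ hi₀ lam2 hlam2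
end
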